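/- arXiv:1911.02358 — 3 statements merged into one kernel-verified Lean document; each statement's English description precedes it below -/
import Mathlib

section
/- The alternating group A₅ has no faithful 2-dimensional complex linear representation. -/
lemma sq_one_det_one (M : Matrix (Fin 2) (Fin 2) ℂ) (h1 : M * M = 1) (h2 : M.det = 1) :
    M = 1 ∨ M = -1 := by
  have h00 : M 0 0 * M 0 0 + M 0 1 * M 1 0 = 1 := by
    have := congrFun (congrFun h1 0) 0
    simpa [Matrix.mul_apply, Fin.sum_univ_two, Matrix.one_apply] using this
  have h01 : M 0 0 * M 0 1 + M 0 1 * M 1 1 = 0 := by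
    have := congrFun (congrFun h1 0) 1
    simpa [Matrix.mul_apply, Fin.sum_univ_two, Matrix.one_apply] using this
  have h10 : M 1 0 * M 0 0 + M 1 1 * M 1 0 = 0 := by
    have := congrFun (congrFun h1 1) 0
    simpa [Matrix.mul_apply, Fin.sum_univ_two, Matrix.one_apply] using this
  have hdet : M 0 0 * M 1 1 - M 0 1 * M 1 0 = 1 := by
    rw [Matrix.det_fin_two] at h2; exact h2
  rcases eq_or_ne (M 0 0 + M 1 1) 0 with htr | htr
  · exfalso
    have h2' : (2 : ℂ) = 0 := by
      linear_combination -h00 - hdet + M 0 0 * htr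
    norm_num at h2'
  · have hb : M 0 1 = 0 := by
      have h : M 0 1 * (M 0 0 + M 1 1) = 0 := by linear_combination h01
      exact (mul_eq_zero.mp h).resolve_right htr
    have hc : M 1 0 = 0 := by
      have h : M 1 0 * (M 0 0 + M 1 1) = 0 := by linear_combination h10
      exact (mul_eq_zero.mp h).resolve_right htr
    have ha2 : M 0 0 * M 0 0 = 1 := by linear_combination h00 - M 1 0 * hb
    have had : M 0 0 * M 1 1 = 1 := by linear_combination hdet + M 1 0 * hb
    rcases mul_self_eq_one_iff.mp ha2 with ha | ha
    · left
      have hd : M 1 1 = 1 := by linear_combination had - M 1 1 * ha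
      ext i j
      fin_cases i <;> fin_cases j <;>
        simp [ha, hb, hc, hd, Matrix.one_apply]
    · right
      have hd : M 1 1 = -1 := by linear_combination -had + M 1 1 * ha
      ext i j
      fin_cases i <;> fin_cases j <;>
        simp [ha, hb, hc, hd, Matrix.one_apply]

/-- The alternating group `A₅` has no faithful 2-dimensional complex linear representation:
there is no injective group homomorphism `A₅ → GL(2,ℂ)`. -/
theorem A5_no_faithful_two_dimensional_rep :
    ¬ ∃ f : alternatingGroup (Fin 5) →* Matrix.GeneralLinearGroup (Fin 2) ℂ,
        Function.Injective f := by
  rintro ⟨f, hf⟩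
  set g₁ : alternatingGroup (Fin 5) := ⟨Equiv.swap 0 1 * Equiv.swap 2 3, Equiv.Perm.mem_alternatingGroup.mpr (by decide)⟩ with hg₁
  set g₂ : alternatingGroup (Fin 5) := ⟨Equiv.swap 0 2 * Equiv.swap 1 3, Equiv.Perm.mem_alternatingGroup.mpr (by decide)⟩ with hg₂
  set g₃ : alternatingGroup (Fin 5) := ⟨Equiv.swap 0 1 * Equiv.swap 1 2, Equiv.Perm.mem_alternatingGroup.mpr (by decide)⟩ with hg₃
  -- the determinant composed with f must be trivial
  set φ : alternatingGroup (Fin 5) →* ℂˣ := (Matrix.GeneralLinearGroup.det).comp f with hφ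
  have hker : φ.ker = ⊤ := by
    rcases (MonoidHom.normal_ker φ).eq_bot_or_eq_top with h | h
    · exfalso
      have hinj : Function.Injective φ := (MonoidHom.ker_eq_bot_iff φ).mp h
      have hcomm : g₁ * g₃ = g₃ * g₁ := hinj (by rw [map_mul, map_mul, mul_comm])
      have : ¬ (g₁ * g₃ = g₃ * g₁) := by decide
      exact this hcomm
    · exact h
  have hdet : ∀ g : alternatingGroup (Fin 5), ((f g : Matrix (Fin 2) (Fin 2) ℂ)).det = 1 := by
    intro g
    have : φ g = 1 := by
      have : g ∈ φ.ker := hker ▸ Subgroup.mem_top g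
      exact this
    have := congrArg Units.val this
    rw [hφ] at this
    simpa [Matrix.GeneralLinearGroup.val_det_apply] using this
  have hsq : ∀ g : alternatingGroup (Fin 5), g * g = 1 →
      ((f g : Matrix (Fin 2) (Fin 2) ℂ)) * (f g) = 1 := by
    intro g hg
    have : f g * f g = 1 := by rw [← map_mul, hg, map_one]
    exact congrArg Units.val this
  have key : ∀ g : alternatingGroup (Fin 5), g * g = 1 → g ≠ 1 →
      ((f g : Matrix (Fin 2) (Fin 2) ℂ)) = -1 := by
    intro g hg hne
    rcases sq_one_det_one _ (hsq g hg) (hdet g) with h | h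
    · exfalso
      apply hne
      apply hf
      rw [map_one]
      exact Units.ext h
    · exact h
  have e₁ : ((f g₁ : Matrix (Fin 2) (Fin 2) ℂ)) = -1 := key g₁ (by decide) (by decide)
  have e₂ : ((f g₂ : Matrix (Fin 2) (Fin 2) ℂ)) = -1 := key g₂ (by decide) (by decide)
  have : g₁ = g₂ := hf (Units.ext (e₁.trans e₂.symm))
  exact absurd this (by decide)
end

section
/- The dihedral group of order 2n with n even does not admit a faithful 2-dimensional complex representation ρ such that the composite map to PGL(2,ℂ) is still injective with the same image order 2n lifting isomorphically; specifically, for n even, any subgroup of GL(2,ℂ) mapping isomorphically onto a dihedral subgroup of order 2n of PGL(2,ℂ) does not exist when 4 divides 2n and the dihedral group contains a Klein four-subgroup. -/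
/-- `PGL2` is `PGL(2,ℂ)`, the quotient of `GL(2,ℂ)` by its center (the scalar matrices). -/
abbrev PGL2 : Type :=
  Matrix.GeneralLinearGroup (Fin 2) ℂ ⧸ Subgroup.center (Matrix.GeneralLinearGroup (Fin 2) ℂ)

/-- The projection `GL(2,ℂ) → PGL(2,ℂ)`. -/
abbrev projPGL2 : Matrix.GeneralLinearGroup (Fin 2) ℂ →* PGL2 :=
  QuotientGroup.mk' (Subgroup.center (Matrix.GeneralLinearGroup (Fin 2) ℂ))

/-!
By Cayley–Hamilton a `2 × 2` involution `M` satisfies `tr M • M = (1 + det M) • 1`, so if `M` is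
not scalar its trace vanishes and `det M = -1`. Three non-central involutions `A`, `B`, `AB` in
`GL(2, K)` are therefore impossible when `2 ≠ 0` in `K`: `det (AB) = det A * det B = 1`.
For `n` even the dihedral group of order `2n` contains the Klein four-group
`{1, r (n/2), sr 0, sr (-n/2)}`, and a lift to `GL(2, ℂ)` of a subgroup of `PGL(2, ℂ)` sends
non-trivial elements to non-central ones.
-/

open Matrix

theorem Matrix.mul_self_fin_two {R : Type*} [CommRing R] (M : Matrix (Fin 2) (Fin 2) R) :
    M * M = M.trace • M - scalar (Fin 2) M.det := by
  ext i j
  fin_cases i <;> fin_cases j <;>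
    simp [mul_apply, Fin.sum_univ_two, trace_fin_two, det_fin_two] <;> ring

theorem Matrix.det_eq_neg_one_of_mul_self_eq_one {K : Type*} [Field K]
    {M : Matrix (Fin 2) (Fin 2) K} (h : M * M = 1) (hM : M ∉ Set.range (scalar (Fin 2))) :
    M.det = -1 := by
  have hCH : M.trace • M = scalar (Fin 2) (1 + M.det) := by
    rw [map_add, map_one, ← h, mul_self_fin_two, sub_add_cancel]
  have htr : M.trace = 0 := by
    by_contra ht
    refine hM ⟨M.trace⁻¹ * (1 + M.det), ?_⟩
    rw [map_mul, ← hCH, scalar_apply, ← smul_eq_diagonal_mul, inv_smul_smul₀ ht]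
  rw [htr, zero_smul] at hCH
  have h00 := congrFun₂ hCH 0 0
  simp only [zero_apply, scalar_apply, diagonal_apply_eq] at h00
  linear_combination -h00

namespace Matrix.GeneralLinearGroup

variable {K : Type*} [Field K]

theorem det_eq_neg_one_of_mul_self_eq_one {A : GL (Fin 2) K} (h : A * A = 1)
    (hA : A ∉ Subgroup.center (GL (Fin 2) K)) : (A : Matrix (Fin 2) (Fin 2) K).det = -1 :=
  Matrix.det_eq_neg_one_of_mul_self_eq_one (by simpa using congrArg Units.val h)
    (mem_center_iff_val_mem_range_scalar.not.mp hA)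

theorem mem_center_of_mul_self_eq_one [NeZero (2 : K)] {A B : GL (Fin 2) K} (hA : A * A = 1)
    (hB : B * B = 1) (hAB : A * B * (A * B) = 1) :
    A ∈ Subgroup.center (GL (Fin 2) K) ∨ B ∈ Subgroup.center (GL (Fin 2) K) ∨
      A * B ∈ Subgroup.center (GL (Fin 2) K) := by
  by_contra! ⟨hAc, hBc, hABc⟩
  have hdet := det_eq_neg_one_of_mul_self_eq_one hAB hABc
  rw [Units.val_mul, det_mul, det_eq_neg_one_of_mul_self_eq_one hA hAc,
    det_eq_neg_one_of_mul_self_eq_one hB hBc] at hdet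
  exact two_ne_zero (α := K) (by linear_combination hdet)

end Matrix.GeneralLinearGroup

theorem QuotientGroup.eq_one_of_section_apply_mem {G : Type*} [Group G] {N : Subgroup G}
    [N.Normal] {H : Subgroup (G ⧸ N)} {s : H →* G} (hs : ∀ h : H, mk' N (s h) = h) {h : H}
    (hh : s h ∈ N) : h = 1 := by
  rw [← OneMemClass.coe_eq_one, ← hs h]
  exact (eq_one_iff _).mpr hh

theorem ZMod.exists_ne_zero_add_self_eq_zero {n : ℕ} (hn : Even n) (hn0 : n ≠ 0) :
    ∃ k : ZMod n, k ≠ 0 ∧ k + k = 0 := by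
  obtain ⟨m, rfl⟩ := hn
  refine ⟨m, fun hm ↦ ?_, by rw [← Nat.cast_add, natCast_self]⟩
  have := Nat.le_of_dvd (by omega) ((natCast_eq_zero_iff _ _).mp hm)
  omega

theorem DihedralGroup.exists_klein_four {n : ℕ} (hn : Even n) (hn0 : n ≠ 0) :
    ∃ a b : DihedralGroup n, a ≠ 1 ∧ b ≠ 1 ∧ a * b ≠ 1 ∧
      a * a = 1 ∧ b * b = 1 ∧ a * b * (a * b) = 1 := by
  obtain ⟨k, hk0, hkk⟩ := ZMod.exists_ne_zero_add_self_eq_zero hn hn0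
  refine ⟨r k, sr 0, ?_, ?_, ?_, ?_, sr_mul_self 0, ?_⟩
  · rwa [one_def, Ne, r.injEq]
  · simp only [one_def, ne_eq, reduceCtorEq, not_false_eq_true]
  · simp only [r_mul_sr, one_def, ne_eq, reduceCtorEq, not_false_eq_true]
  · rw [r_mul_r, hkk, r_zero]
  · rw [r_mul_sr, sr_mul_self]

/-- For `n` even (so that `4 ∣ 2n` and the dihedral group of order `2n` contains a Klein
four-subgroup), no dihedral subgroup of `PGL(2,ℂ)` of order `2n` lifts isomorphically to
`GL(2,ℂ)`: there is no group-homomorphism section of the projection over such a subgroup. -/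
theorem even_dihedral_subgroup_of_PGL2_does_not_lift
    (n : ℕ) (hn : Even n) (hn0 : n ≠ 0)
    (H : Subgroup PGL2) (hH : Nonempty (H ≃* DihedralGroup n)) :
    ¬ ∃ s : H →* Matrix.GeneralLinearGroup (Fin 2) ℂ,
        ∀ h : H, projPGL2 (s h) = (h : PGL2) := by
  rintro ⟨s, hs⟩
  obtain ⟨e⟩ := hH
  obtain ⟨a, b, ha, hb, hab, ha2, hb2, hab2⟩ := DihedralGroup.exists_klein_four hn hn0
  let f := s.comp e.symm.toMonoidHom
  have hf : ∀ x, f x ∈ Subgroup.center (GL (Fin 2) ℂ) → x = 1 := fun x hx ↦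
    e.symm.map_eq_one_iff.mp (QuotientGroup.eq_one_of_section_apply_mem hs hx)
  have hcentral := GeneralLinearGroup.mem_center_of_mul_self_eq_one (A := f a) (B := f b)
    (by rw [← map_mul, ha2, map_one]) (by rw [← map_mul, hb2, map_one])
    (by rw [← map_mul, ← map_mul, hab2, map_one])
  rw [← map_mul] at hcentral
  rcases hcentral with h | h | h
  exacts [ha (hf a h), hb (hf b h), hab (hf _ h)]
end

section
/- There is no injective group homomorphism from A₆ into GL(3,ℂ) whose composition with the projection to PGL(3,ℂ) is injective with image the Valentiner group; equivalently, any subgroup of SL(3,ℂ) projecting onto a subgroup of PGL(3,ℂ) isomorphic to A₆ has order divisible by 3·360 = 1080, since the preimage in SL(3,ℂ) contains the three scalar matrices jⁿI with j a primitive cube root of unity. -/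
/-!
Suppose `ρ` is a faithful representation of `A₆` on a 3-dimensional space. The commuting 3-cycles
`a = (0 1 2)` and `b = (3 4 5)` act by commuting operators of order 3, which are simultaneously
diagonalisable, with cube roots of unity as eigenvalues; as `A₆` is perfect, both have
determinant 1. In dimension 3 an eigenvalue triple `(x₀, x₁, x₂)` of cube roots with product 1 is
constant as soon as `x₀ = x₁`, so matching the ratio of the first two eigenvalues shows that
`ρ a` or some `ρ (aⁱ b)` is a scalar. Its preimage is then central in `A₆`, hence trivial, which
it is not.

For a subgroup `G` of `SL(3,ℂ)` mapping onto a copy of `A₆` in `PGL(3,ℂ)`, the kernel of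
`G → A₆` consists of scalar matrices, so has order dividing 3; it is not trivial, since otherwise
`A₆` would embed in `GL(3,ℂ)`. Hence `|G| = 3 · 360`.
-/

/-- `PGL3` is `PGL(3,ℂ)`, the quotient of `GL(3,ℂ)` by its center (the scalar matrices). -/
abbrev PGL3 : Type :=
  Matrix.GeneralLinearGroup (Fin 3) ℂ ⧸ Subgroup.center (Matrix.GeneralLinearGroup (Fin 3) ℂ)

/-- The projection `GL(3,ℂ) → PGL(3,ℂ)`. -/
abbrev projPGL3 : Matrix.GeneralLinearGroup (Fin 3) ℂ →* PGL3 :=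
  QuotientGroup.mk' (Subgroup.center (Matrix.GeneralLinearGroup (Fin 3) ℂ))

/-- The projection `SL(3,ℂ) → PGL(3,ℂ)`. -/
abbrev SL3toPGL3 : Matrix.SpecialLinearGroup (Fin 3) ℂ →* PGL3 :=
  projPGL3.comp Matrix.SpecialLinearGroup.toGL

open Module Module.End Polynomial

theorem eq_of_pow_three_eq_one_of_mul_mul_eq_one {R : Type*} [CommRing R] {x z : R}
    (hx : x ^ 3 = 1) (h : x * x * z = 1) : z = x := by
  linear_combination x * h - z * hx

theorem eq_of_prod_eq_one_of_pow_three_eq_one {R : Type*} [CommRing R] {d : Fin 3 → R}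
    (hd : d 0 ^ 3 = 1) (hprod : ∏ k, d k = 1) (h10 : d 1 = d 0) (k : Fin 3) : d k = d 0 := by
  rw [Fin.prod_univ_three, h10] at hprod
  fin_cases k
  exacts [rfl, h10, eq_of_pow_three_eq_one_of_mul_mul_eq_one hd hprod]

theorem exists_pow_mul_const_of_pow_three_eq_one {K : Type*} [Field K] {μ ν : Fin 3 → K}
    (hμ : ∀ k, μ k ^ 3 = 1) (hν : ∀ k, ν k ^ 3 = 1) (hμ1 : ∏ k, μ k = 1) (hν1 : ∏ k, ν k = 1) :
    (∀ k, μ k = μ 0) ∨ ∃ i < 3, ∀ k, μ k ^ i * ν k = μ 0 ^ i * ν 0 := by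
  by_cases h10 : μ 1 = μ 0
  · exact .inl (eq_of_prod_eq_one_of_pow_three_eq_one (hμ 0) hμ1 h10)
  have hne : ∀ {x : K}, x ^ 3 = 1 → x ≠ 0 := fun hx h ↦ by simp [h] at hx
  have hx : IsPrimitiveRoot (μ 1 / μ 0) 3 := by
    refine isPrimitiveRoot_of_mem_nthRootsFinset Nat.prime_three ?_ ?_
    · rw [mem_nthRootsFinset three_pos, div_pow, hμ, hμ, div_one]
    · rwa [Ne, div_eq_one_iff_eq (hne (hμ 0))]
  obtain ⟨i, hi3, hi⟩ := hx.eq_pow_of_pow_eq_one (ξ := ν 0 / ν 1) (by rw [div_pow, hν, hν, div_one])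
  refine .inr ⟨i, hi3, eq_of_prod_eq_one_of_pow_three_eq_one ?_ ?_ ?_⟩
  · rw [mul_pow, ← pow_mul, mul_comm i, pow_mul, hμ, hν, one_pow, one_mul]
  · rw [Finset.prod_mul_distrib, Finset.prod_pow, hμ1, hν1, one_pow, one_mul]
  · rw [div_pow, div_eq_div_iff (pow_ne_zero _ (hne (hμ 0))) (hne (hν 1))] at hi
    linear_combination hi

theorem MonoidHom.eq_one_of_commutator_eq_top {G M : Type*} [Group G] [CommMonoid M]
    (hG : commutator G = ⊤) (χ : G →* M) (x : G) : χ x = 1 :=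
  congrArg Units.val (Abelianization.commutator_subset_ker χ.toHomUnits (hG ▸ Subgroup.mem_top x))

section

variable {K V : Type*} [Field K] [AddCommGroup V] [Module K V]

theorem Module.End.isSemisimple_of_pow_eq_one {f : End K V} {n : ℕ} (hf : f ^ n = 1)
    (hn : (n : K) ≠ 0) : f.IsSemisimple :=
  isSemisimple_of_squarefree_aeval_eq_zero (separable_X_pow_sub_C 1 hn one_ne_zero).squarefree
    (by simp [hf])

theorem Module.End.exists_basis_hasEigenvector_of_commute [IsAlgClosed K] [FiniteDimensional K V]
    {n : ℕ} (hV : finrank K V = n) {ι : Type*} (f : ι → End K V)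
    (hcomm : Pairwise fun i j ↦ Commute (f i) (f j)) (hf : ∀ i, (f i).IsSemisimple) :
    ∃ (b : Basis (Fin n) K V) (μ : ι → Fin n → K), ∀ i k, (f i).HasEigenvector (μ i k) (b k) := by
  classical
  subst hV
  let E : (ι → K) → Submodule K V := fun χ ↦ ⨅ i, (f i).maxGenEigenspace (χ i)
  have hE : DirectSum.IsInternal E := by
    refine (DirectSum.isInternal_submodule_iff_iSupIndep_and_iSup_eq_top E).mpr
      ⟨independent_iInf_maxGenEigenspace_of_forall_mapsTo f fun i j φ ↦
        mapsTo_maxGenEigenspace_of_comm ?_ φ,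
      iSup_iInf_maxGenEigenspace_eq_top_of_iSup_maxGenEigenspace_eq_top_of_commute f hcomm
        fun i ↦ iSup_maxGenEigenspace_eq_top (f i)⟩
    rcases eq_or_ne i j with rfl | hij
    exacts [Commute.refl _, (hcomm hij).symm]
  let bE := fun χ ↦ finBasis K (E χ)
  let c := hE.collectedBasis bE
  let e := c.indexEquiv (finBasis K V)
  refine ⟨c.reindex e, fun i k ↦ (e.symm k).1 i, fun i k ↦ ⟨?_, (c.reindex e).ne_zero k⟩⟩
  have hmem := (Submodule.mem_iInf _).mp (hE.collectedBasis_mem bE (e.symm k)) i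
  rw [(hf i).isFinitelySemisimple.maxGenEigenspace_eq_eigenspace] at hmem
  rw [Basis.reindex_apply]
  exact hmem

theorem LinearMap.det_eq_prod_of_hasEigenvector {ι : Type*} [Fintype ι] [DecidableEq ι]
    (b : Basis ι K V) {f : End K V} {μ : ι → K} (h : ∀ k, f.HasEigenvector (μ k) (b k)) :
    LinearMap.det f = ∏ k, μ k := by
  have : LinearMap.toMatrix b b f = Matrix.diagonal μ := by
    ext i j
    rw [LinearMap.toMatrix_apply, (h j).apply_eq_smul]
    rcases eq_or_ne i j with rfl | hij
    · simp
    · simp [hij]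
  rw [← LinearMap.det_toMatrix b, this, Matrix.det_diagonal]

theorem Module.End.eq_algebraMap_of_hasEigenvector {ι : Type*} (b : Basis ι K V) {f : End K V}
    {c : K} (h : ∀ k, f.HasEigenvector c (b k)) : f = algebraMap K (End K V) c :=
  b.ext fun k ↦ by simp [(h k).apply_eq_smul]

theorem Module.End.HasEigenvector.pow_eq_one {f : End K V} {μ : K} {v : V}
    (hv : f.HasEigenvector μ v) {n : ℕ} (hf : f ^ n = 1) : μ ^ n = 1 := by
  have h := hv.pow_apply n
  rw [hf, one_apply] at h
  exact smul_left_injective K hv.2 (by simpa using h.symm)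

theorem Module.End.HasEigenvector.pow_mul {f g : End K V} {μ ν : K} {v : V}
    (hf : f.HasEigenvector μ v) (hg : g.HasEigenvector ν v) (i : ℕ) :
    (f ^ i * g).HasEigenvector (μ ^ i * ν) v := by
  refine ⟨mem_eigenspace_iff.mpr ?_, hf.2⟩
  rw [mul_apply, hg.apply_eq_smul, map_smul, hf.pow_apply, smul_smul, mul_comm]

theorem Module.End.exists_eq_algebraMap_of_commute_of_pow_three_eq_one [IsAlgClosed K]
    (h3 : (3 : K) ≠ 0) (hV : finrank K V = 3) {f g : End K V} (hfg : Commute f g) (hf : f ^ 3 = 1) (hg : g ^ 3 = 1)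
    (hdf : LinearMap.det f = 1) (hdg : LinearMap.det g = 1) :
    (∃ c, f = algebraMap K (End K V) c) ∨ ∃ i < 3, ∃ c, f ^ i * g = algebraMap K (End K V) c := by
  have : FiniteDimensional K V := Module.finite_of_finrank_eq_succ hV
  have h3' : ((3 : ℕ) : K) ≠ 0 := by exact_mod_cast h3
  obtain ⟨b, μ, hb⟩ := exists_basis_hasEigenvector_of_commute hV ![f, g]
    (fun i j _ ↦ by fin_cases i <;> fin_cases j <;> simp [hfg, hfg.symm])
    (Fin.forall_fin_two.mpr ⟨isSemisimple_of_pow_eq_one hf h3', isSemisimple_of_pow_eq_one hg h3'⟩)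
  have hμ (k : Fin 3) : f.HasEigenvector (μ 0 k) (b k) := hb 0 k
  have hν (k : Fin 3) : g.HasEigenvector (μ 1 k) (b k) := hb 1 k
  rcases exists_pow_mul_const_of_pow_three_eq_one (fun k ↦ (hμ k).pow_eq_one hf)
    (fun k ↦ (hν k).pow_eq_one hg) (by rw [← LinearMap.det_eq_prod_of_hasEigenvector b hμ, hdf])
    (by rw [← LinearMap.det_eq_prod_of_hasEigenvector b hν, hdg]) with hconst | ⟨i, hi, hconst⟩
  · exact .inl ⟨_, eq_algebraMap_of_hasEigenvector b fun k ↦ hconst k ▸ hμ k⟩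
  · exact .inr ⟨i, hi, _,
      eq_algebraMap_of_hasEigenvector b fun k ↦ hconst k ▸ (hμ k).pow_mul (hν k) i⟩

theorem MonoidHom.not_injective_of_commute_of_pow_three_eq_one {G : Type*} [Group G]
    [IsAlgClosed K] (hG : Subgroup.center G = ⊥) (h3 : (3 : K) ≠ 0)
    (hV : finrank K V = 3) (ρ : G →* End K V) {a b : G} (hab : Commute a b) (ha : a ^ 3 = 1)
    (hb : b ^ 3 = 1) (hda : LinearMap.det (ρ a) = 1) (hdb : LinearMap.det (ρ b) = 1)
    (ha1 : a ≠ 1) (hab1 : ∀ i < 3, a ^ i * b ≠ 1) : ¬ Function.Injective ρ := by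
  intro hρ
  have eq_one_of_eq_algebraMap {x : G} {c : K} (hx : ρ x = algebraMap K _ c) : x = 1 := by
    rw [← Subgroup.mem_bot, ← hG, Subgroup.mem_center_iff]
    exact fun y ↦ (Commute.of_map hρ (hx ▸ (Algebra.commutes c (ρ y)).symm)).eq
  rcases Module.End.exists_eq_algebraMap_of_commute_of_pow_three_eq_one h3 hV (hab.map ρ)
    (by rw [← map_pow, ha, map_one]) (by rw [← map_pow, hb, map_one]) hda hdb
    with ⟨c, hc⟩ | ⟨i, hi, c, hc⟩
  · exact ha1 (eq_one_of_eq_algebraMap hc)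
  · exact hab1 i hi (eq_one_of_eq_algebraMap (by rw [map_mul, map_pow, hc]))

open Equiv in
theorem alternatingGroup.not_injective_fin_six_of_finrank_eq_three [IsAlgClosed K]
    (h3 : (3 : K) ≠ 0) (hV : finrank K V = 3) (ρ : alternatingGroup (Fin 6) →* End K V) : ¬ Function.Injective ρ := by
  have hdet := (LinearMap.det.comp ρ).eq_one_of_commutator_eq_top
    (commutator_alternatingGroup_eq_top (by simp))
  refine ρ.not_injective_of_commute_of_pow_three_eq_one (center_eq_bot (by simp)) h3 hV
    (a := ⟨c[0, 1, 2], Perm.mem_alternatingGroup.mpr (by decide)⟩)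
    (b := ⟨c[3, 4, 5], Perm.mem_alternatingGroup.mpr (by decide)⟩)
    ?_ (by decide) (by decide) (hdet _) (hdet _) (by decide) (by decide)
  unfold Commute SemiconjBy
  decide

end

theorem alternatingGroup.not_injective_fin_six_to_GL_fin_three {K : Type*} [Field K]
    [IsAlgClosed K] (h3 : (3 : K) ≠ 0)
    (f : alternatingGroup (Fin 6) →* Matrix.GeneralLinearGroup (Fin 3) K) :
    ¬ Function.Injective f := fun hf ↦
  not_injective_fin_six_of_finrank_eq_three h3 (finrank_fin_fun K)
    ((Units.coeHom _).comp (Matrix.GeneralLinearGroup.toLin.toMonoidHom.comp f))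
    (Units.val_injective.comp (Matrix.GeneralLinearGroup.toLin.injective.comp hf))

theorem Matrix.SpecialLinearGroup.nat_card_center_complex {n : Type*} [Fintype n] [DecidableEq n]
    [Nonempty n] : Nat.card (Subgroup.center (SpecialLinearGroup n ℂ)) = Fintype.card n := by
  rw [Nat.card_congr (center_equiv_rootsOfUnity' (Classical.arbitrary n)).toEquiv,
    Complex.card_rootsOfUnity]

theorem ker_SL3toPGL3_le_center : SL3toPGL3.ker ≤ Subgroup.center _ := by
  intro x hx
  have hx' := (QuotientGroup.eq_one_iff _).mp hx
  rw [Subgroup.mem_center_iff] at hx' ⊢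
  exact fun y ↦ Matrix.SpecialLinearGroup.toGL_injective (by simp only [map_mul, hx'])

theorem nat_card_eq_of_map_SL3toPGL3_mulEquiv (G : Subgroup (Matrix.SpecialLinearGroup (Fin 3) ℂ))
    (e : G.map SL3toPGL3 ≃* alternatingGroup (Fin 6)) : Nat.card G = 3 * 360 := by
  let ψ : G →* alternatingGroup (Fin 6) := e.toMonoidHom.comp (SL3toPGL3.subgroupMap G)
  have hψ : Function.Surjective ψ := e.surjective.comp (SL3toPGL3.subgroupMap_surjective G)
  have hker : ψ.ker.map G.subtype ≤ Subgroup.center _ := by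
    rintro _ ⟨x, hx, rfl⟩
    have hx1 : SL3toPGL3.subgroupMap G x = 1 := (map_eq_one_iff e e.injective).mp hx
    exact ker_SL3toPGL3_le_center (congrArg Subtype.val hx1)
  have hdvd : Nat.card ψ.ker ∣ 3 := by
    rw [← Subgroup.card_map_of_injective G.subtype_injective]
    simpa [Matrix.SpecialLinearGroup.nat_card_center_complex] using Subgroup.card_dvd_of_le hker
  have hne : Nat.card ψ.ker ≠ 1 := by
    intro h
    let χ := MulEquiv.ofBijective ψ
      ⟨(MonoidHom.ker_eq_bot_iff ψ).mp (Subgroup.eq_bot_of_card_eq _ h), hψ⟩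
    exact alternatingGroup.not_injective_fin_six_to_GL_fin_three three_ne_zero
      ((Matrix.SpecialLinearGroup.toGL.comp G.subtype).comp χ.symm.toMonoidHom)
      (Matrix.SpecialLinearGroup.toGL_injective.comp (G.subtype_injective.comp χ.symm.injective))
  rw [Subgroup.card_eq_card_quotient_mul_card_subgroup ψ.ker,
    Nat.card_congr (QuotientGroup.quotientKerEquivOfSurjective ψ hψ).toEquiv,
    nat_card_alternatingGroup, (Nat.prime_three.eq_one_or_self_of_dvd _ hdvd).resolve_left hne]
  simp [Nat.factorial]

/-- There is no injective group homomorphism `A₆ → GL(3,ℂ)` whose composition with the projection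
to `PGL(3,ℂ)` is injective; equivalently, any subgroup of `SL(3,ℂ)` projecting onto a subgroup of
`PGL(3,ℂ)` isomorphic to `A₆` (the Valentiner group) has order divisible by `3·360 = 1080`. -/
theorem A6_does_not_lift_to_GL3_and_valentiner_preimage_order :
    (¬ ∃ f : alternatingGroup (Fin 6) →* Matrix.GeneralLinearGroup (Fin 3) ℂ,
        Function.Injective f ∧ Function.Injective (projPGL3.comp f)) ∧
    (∀ G : Subgroup (Matrix.SpecialLinearGroup (Fin 3) ℂ),
        Nonempty (G.map SL3toPGL3 ≃* alternatingGroup (Fin 6)) →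
        (3 * 360 : ℕ) ∣ Nat.card G) :=
  ⟨fun ⟨f, hf, _⟩ ↦ alternatingGroup.not_injective_fin_six_to_GL_fin_three three_ne_zero f hf,
    fun G ⟨e⟩ ↦ (nat_card_eq_of_map_SL3toPGL3_mulEquiv G e).symm.dvd⟩
end
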